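/- arXiv:1212.2336 — 3 statements merged into one kernel-verified Lean document; each statement's English description precedes it below -/
import Mathlib

section
/- A one-dimensional linear subspace L of V is a Weyl line if and only if L is spanned by a vector of V taking exactly two distinct values among its coordinates. Moreover, the map sending a Weyl line L to the partition of {1,…,n+1} into the two level sets of any spanning vector of L is well defined (independent of the chosen spanning vector) and is a bijection from the set of Weyl lines onto the set of partitions of {1,…,n+1} into two nonempty parts. -/
/-! Basic setup: type A_n geometric representation, Weyl lines, combinatorics. -/

namespace TLpaper

/-- A permutation is a transposition. -/
def IsTransposition {α : Type} [DecidableEq α] (σ : Equiv.Perm α) : Prop :=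
  ∃ a b, a ≠ b ∧ σ = Equiv.swap a b

variable (k : Type) [Field k] [CharZero k] (n : ℕ)

/-- The reflecting hyperplane of a permutation `t` inside `V = {x | ∑ x i = 0}`:
the set of points of `V` fixed by permuting the coordinates by `t`.  For a
transposition `t = (a b)` this is `{x ∈ V | x a = x b}`. -/
def Hyp (t : Equiv.Perm (Fin (n + 1))) : Set (Fin (n + 1) → k) :=
  {x | (∑ i, x i) = 0 ∧ ∀ i, x (t i) = x i}

/-- A Weyl line: a one-dimensional linear subspace of `V` which is an
intersection of a (possibly empty) family of reflecting hyperplanes. -/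
def IsWeylLine (L : Set (Fin (n + 1) → k)) : Prop :=
  (∃ v : Fin (n + 1) → k, v ≠ 0 ∧ L = Set.range fun c : k => c • v) ∧
  ∃ T : Set (Equiv.Perm (Fin (n + 1))),
    (∀ t ∈ T, IsTransposition t) ∧
    L = {x | (∑ i, x i) = 0} ∩ ⋂ t ∈ T, Hyp k n t

/-- `Z`: the union of all Weyl lines. -/
def ZZ : Set (Fin (n + 1) → k) := ⋃ L ∈ {L | IsWeylLine k n L}, L

/-- `V_t`: the union of all Weyl lines transverse to `t` (i.e. not contained in `H_t`). -/
def Vt (t : Equiv.Perm (Fin (n + 1))) : Set (Fin (n + 1) → k) :=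
  ⋃ L ∈ {L | IsWeylLine k n L ∧ ¬L ⊆ Hyp k n t}, L

open Fin.NatCast in
/-- The simple transposition `s_i = (i, i+1)` (0-indexed: it swaps coordinates
`i` and `i+1` of `Fin (n+1)`, for `i < n`). -/
def simple (i : ℕ) : Equiv.Perm (Fin (n + 1)) :=
  Equiv.swap (i : Fin (n + 1)) ((i + 1 : ℕ) : Fin (n + 1))

/-- `V_i := V_{s_i}`. -/
def Vi (i : ℕ) : Set (Fin (n + 1) → k) := Vt k n (simple n i)

/-- The action of a permutation on a subset of `k^{n+1}` (permuting coordinates). -/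
def permSet (σ : Equiv.Perm (Fin (n + 1))) (W : Set (Fin (n + 1) → k)) :
    Set (Fin (n + 1) → k) :=
  (fun x => x ∘ σ) '' W

/-- `i · W := V_i ∩ (W ∪ s_i (W))`. -/
def dotAct (i : ℕ) (W : Set (Fin (n + 1) → k)) : Set (Fin (n + 1) → k) :=
  Vi k n i ∩ (W ∪ permSet k n (simple n i) W)

/-- The set `W_{i_1 ⋯ i_m}` associated with a sequence of indices. -/
def seqSet : List ℕ → Set (Fin (n + 1) → k)
  | [] => ZZ k n
  | [i] => Vi k n i
  | i :: j :: l => dotAct k n i (seqSet (j :: l))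

/-- Membership in the family `𝒱_n`. -/
def memVn (W : Set (Fin (n + 1) → k)) : Prop :=
  ∃ l : List ℕ, l ≠ [] ∧ (∀ i ∈ l, i < n) ∧ W = seqSet k n l

/-- A set of pairwise commuting transpositions. -/
def CommTranspositions (Q : Set (Equiv.Perm (Fin (n + 1)))) : Prop :=
  (∀ t ∈ Q, IsTransposition t) ∧ ∀ t ∈ Q, ∀ t' ∈ Q, t * t' = t' * t

/-! The line `k • v` lies in every reflecting hyperplane containing `v`, and these cut out the
space of zero-sum vectors constant on the level sets of `v` (a transposition fixes `v` iff it
swaps two coordinates where `v` agrees). If `v` takes two values, every such vector is affine in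
`v`, and the zero sum kills the constant term, so the space is the line; a third value lets the
centered indicator of a level set escape the line. Hence a Weyl line is the space attached to
the level-set partition of any spanning vector, and a two-block partition is realised by
centering any function whose level sets are the two blocks. -/

section SetoidKer

variable {α β γ : Type*}

lemma _root_.Setoid.ker_comp_of_injective {g : β → γ} (hg : g.Injective) (f : α → β) :
    Setoid.ker (g ∘ f) = Setoid.ker f :=
  Setoid.ext fun _ _ => hg.eq_iff

lemma _root_.Setoid.ncard_range_eq_ncard_classes_ker (f : α → β) :
    (Set.range f).ncard = (Setoid.ker f).classes.ncard := by
  rw [← Nat.card_coe_set_eq, ← Nat.card_coe_set_eq,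
    ← Nat.card_congr (Setoid.quotientKerEquivRange f),
    Nat.card_congr (Setoid.quotientEquivClasses (Setoid.ker f))]

lemma _root_.Setoid.exists_ker_eq (s : Setoid α) [Countable (Quotient s)] [Infinite β] :
    ∃ f : α → β, Setoid.ker f = s := by
  obtain ⟨e, he⟩ := Countable.exists_injective_nat (Quotient s)
  refine ⟨Infinite.natEmbedding β ∘ e ∘ Quotient.mk s, ?_⟩
  rw [Setoid.ker_comp_of_injective (Infinite.natEmbedding β).injective,
    Setoid.ker_comp_of_injective he]
  exact Setoid.ker_mk_eq s

end SetoidKer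

lemma _root_.Equiv.apply_swap_apply_of_eq {α β : Type*} [DecidableEq α] {v : α → β} {i j : α}
    (h : v i = v j) (m : α) : v (Equiv.swap i j m) = v m := by
  rw [Equiv.swap_apply_def]
  split_ifs <;> simp_all

section TwoValued

variable {ι K : Type*} [Field K]

/-- Lagrange interpolation through the two values of `v`. -/
lemma exists_eq_mul_add_of_ker_le {v x : ι → K} {a b : K} (hab : a ≠ b)
    (hv : ∀ i, v i = a ∨ v i = b) (hx : Setoid.ker v ≤ Setoid.ker x) :
    ∃ α β : K, ∀ i, x i = α * v i + β := by
  have hfac : x.FactorsThrough v := fun i j h => hx h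
  set f := Function.extend v x 0
  have hab' : b - a ≠ 0 := sub_ne_zero.2 hab.symm
  refine ⟨(f b - f a) / (b - a), f a - (f b - f a) / (b - a) * a, fun i => ?_⟩
  rw [← hfac.extend_apply 0 i]
  rcases hv i with h | h <;> rw [h] <;> field_simp <;> ring

lemma ker_eq_of_range_smul_eq {v w : ι → K} (hw : w ≠ 0)
    (h : (Set.range fun c : K => c • v) = Set.range fun c : K => c • w) :
    Setoid.ker v = Setoid.ker w := by
  obtain ⟨c, rfl⟩ : w ∈ Set.range fun c : K => c • v := h ▸ ⟨1, one_smul K w⟩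
  have hc : c ≠ 0 := by
    rintro rfl
    exact hw (zero_smul K v)
  exact (Setoid.ker_comp_of_injective (mul_right_injective₀ hc) v).symm

lemma ne_zero_of_ncard_range_eq_two {M : Type*} [Zero M] {v : ι → M}
    (h : (Set.range v).ncard = 2) : v ≠ 0 := by
  rintro rfl
  have : (Set.range (0 : ι → M)).ncard ≤ 1 :=
    (Set.ncard_le_ncard (Set.range_const_subset (ι := ι) (c := (0 : M)))).trans
      (Set.ncard_singleton (0 : M)).le
  omega

end TwoValued

section LevelSpace

variable {ι K : Type*} [Fintype ι] [Field K]

def levelSpace (s : Setoid ι) : Set (ι → K) :=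
  {x | ∑ i, x i = 0 ∧ s ≤ Setoid.ker x}

/-- `card ι • (u - mean u)`, scaled to avoid division. -/
def center (u : ι → K) : ι → K :=
  fun i => Fintype.card ι * u i - ∑ j, u j

lemma sum_center (u : ι → K) : ∑ i, center u i = 0 := by
  simp only [center, Finset.sum_sub_distrib, ← Finset.mul_sum, Finset.sum_const,
    Finset.card_univ, nsmul_eq_mul, sub_self]

lemma ker_center [CharZero K] [Nonempty ι] (u : ι → K) : Setoid.ker (center u) = Setoid.ker u :=
  Setoid.ker_comp_of_injective (f := u) (g := fun y => (Fintype.card ι : K) * y - ∑ j, u j)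
    fun _ _ h => mul_left_cancel₀ (Nat.cast_ne_zero.2 Fintype.card_ne_zero) (sub_left_inj.1 h)

lemma range_smul_subset_levelSpace {v : ι → K} (hv : ∑ i, v i = 0) :
    (Set.range fun c : K => c • v) ⊆ levelSpace (Setoid.ker v) := by
  rintro _ ⟨c, rfl⟩
  refine ⟨by simp only [Pi.smul_apply, smul_eq_mul, ← Finset.mul_sum, hv, mul_zero], ?_⟩
  intro i j (h : v i = v j)
  simp only [Setoid.ker_def, Pi.smul_apply, h]

lemma levelSpace_ker_eq_range_smul [CharZero K] [Nonempty ι] {v : ι → K} {a b : K}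
    (hab : a ≠ b) (hv : ∀ i, v i = a ∨ v i = b) (hsum : ∑ i, v i = 0) :
    levelSpace (Setoid.ker v) = Set.range fun c : K => c • v := by
  refine subset_antisymm (fun x ⟨hx0, hx⟩ => ?_) (range_smul_subset_levelSpace hsum)
  obtain ⟨α, β, hx⟩ := exists_eq_mul_add_of_ker_le hab hv hx
  have hβ : (Fintype.card ι : K) * β = 0 := by
    simpa [hx, Finset.sum_add_distrib, ← Finset.mul_sum, hsum] using hx0
  have hβ0 : β = 0 :=
    (mul_eq_zero.1 hβ).resolve_left (Nat.cast_ne_zero.2 Fintype.card_ne_zero)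
  exact ⟨α, funext fun i => by simp [hx, hβ0]⟩

lemma exists_ne_of_sum_eq_zero [CharZero K] {v : ι → K} (hv0 : v ≠ 0) (hsum : ∑ i, v i = 0) :
    ∃ i j, v i ≠ v j := by
  by_contra! hconst
  obtain ⟨i₀, hi₀⟩ := Function.ne_iff.1 hv0
  have hN : (Fintype.card ι : K) * v i₀ = 0 := by
    rw [← hsum, Finset.sum_congr rfl fun i _ => hconst i i₀, Finset.sum_const,
      Finset.card_univ, nsmul_eq_mul]
  have : Nonempty ι := ⟨i₀⟩
  exact hi₀ ((mul_eq_zero.1 hN).resolve_left (Nat.cast_ne_zero.2 Fintype.card_ne_zero))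

/-- If `v` took a third value `v m` besides `v i₀ ≠ v j₀`, the centered indicator of the level
set of `v i₀` would lie in `levelSpace (ker v)`; being a multiple `r • v` and taking the same
value at `j₀` and `m` forces `r = 0`, contradicting that it separates `i₀` from `j₀`. -/
lemma ncard_range_eq_two [CharZero K] {v : ι → K} (hv0 : v ≠ 0) (hsum : ∑ i, v i = 0)
    (hv : levelSpace (Setoid.ker v) ⊆ Set.range fun c : K => c • v) :
    (Set.range v).ncard = 2 := by
  classical
  obtain ⟨i₀, j₀, hij⟩ := exists_ne_of_sum_eq_zero hv0 hsum
  have : Nonempty ι := ⟨i₀⟩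
  suffices h : Set.range v = {v i₀, v j₀} by rw [h, Set.ncard_pair hij]
  refine subset_antisymm ?_ (Set.pair_subset ⟨i₀, rfl⟩ ⟨j₀, rfl⟩)
  rintro _ ⟨m, rfl⟩
  by_contra! hm
  simp only [Set.mem_insert_iff, Set.mem_singleton_iff, not_or] at hm
  set u : ι → K := fun i => if v i = v i₀ then 1 else 0
  have hu : Setoid.ker v ≤ Setoid.ker u := fun i j (h : v i = v j) => by
    simp only [Setoid.ker_def, u, h]
  obtain ⟨r, hr⟩ := hv ⟨sum_center u, (ker_center u).symm ▸ hu⟩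
  have hjm : center u j₀ = center u m := by simp [center, u, hij.symm, hm.1]
  have hr0 : r = 0 := by
    rw [← hr] at hjm
    exact (mul_eq_mul_left_iff.1 hjm).resolve_left (Ne.symm hm.2)
  have hi : center u i₀ = center u j₀ := by simp [← hr, hr0]
  rw [← Setoid.ker_def, ker_center, Setoid.ker_def] at hi
  simp [u, hij.symm] at hi

end LevelSpace

section WeylLine

variable {k n}

omit [CharZero k]

lemma levelSpace_ker_subset_iInter_hyp {v : Fin (n + 1) → k}
    {T : Set (Equiv.Perm (Fin (n + 1)))} (hT : ∀ t ∈ T, ∀ i, v (t i) = v i) :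
    levelSpace (Setoid.ker v) ⊆ {x | ∑ i, x i = 0} ∩ ⋂ t ∈ T, Hyp k n t := by
  rintro x ⟨hx0, hx⟩
  exact ⟨hx0, Set.mem_iInter₂.2 fun t ht => ⟨hx0, fun i => hx (hT t ht i)⟩⟩

lemma levelSpace_ker_eq_iInter_hyp (v : Fin (n + 1) → k) :
    levelSpace (Setoid.ker v) = {x | ∑ i, x i = 0} ∩
      ⋂ t ∈ {t | IsTransposition t ∧ ∀ i, v (t i) = v i}, Hyp k n t := by
  refine subset_antisymm (levelSpace_ker_subset_iInter_hyp fun t ht => ht.2) ?_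
  rintro x ⟨hx0, hx⟩
  refine ⟨hx0, fun i j (hij : v i = v j) => ?_⟩
  rcases eq_or_ne i j with rfl | hne
  · rfl
  have hswap := Set.mem_iInter₂.1 hx (Equiv.swap i j)
    ⟨⟨i, j, hne, rfl⟩, Equiv.apply_swap_apply_of_eq hij⟩
  simpa using (hswap.2 i).symm

lemma IsWeylLine.sum_eq_zero {L : Set (Fin (n + 1) → k)} (hL : IsWeylLine k n L)
    {v : Fin (n + 1) → k} (hLv : L = Set.range fun c : k => c • v) : ∑ i, v i = 0 := by
  obtain ⟨-, T, -, hLT⟩ := hL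
  have hv : v ∈ L := hLv ▸ ⟨1, one_smul k v⟩
  exact (hLT ▸ hv).1

lemma IsWeylLine.eq_levelSpace {L : Set (Fin (n + 1) → k)} (hL : IsWeylLine k n L)
    {v : Fin (n + 1) → k} (hLv : L = Set.range fun c : k => c • v) :
    L = levelSpace (Setoid.ker v) := by
  have hsum := hL.sum_eq_zero hLv
  obtain ⟨-, T, -, hLT⟩ := hL
  have hv : v ∈ {x | ∑ i, x i = 0} ∩ ⋂ t ∈ T, Hyp k n t := hLT ▸ hLv ▸ ⟨1, one_smul k v⟩
  refine subset_antisymm (hLv ▸ range_smul_subset_levelSpace hsum) ?_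
  rw [hLT]
  exact levelSpace_ker_subset_iInter_hyp fun t ht => (Set.mem_iInter₂.1 hv.2 t ht).2

lemma isWeylLine_iff [CharZero k] (L : Set (Fin (n + 1) → k)) :
    IsWeylLine k n L ↔ ∃ v : Fin (n + 1) → k, ∑ i, v i = 0 ∧ (Set.range v).ncard = 2 ∧
      L = Set.range fun c : k => c • v := by
  constructor
  · intro hL
    obtain ⟨v, hv0, hLv⟩ := hL.1
    have hsum := hL.sum_eq_zero hLv
    refine ⟨v, hsum, ncard_range_eq_two hv0 hsum ?_, hLv⟩
    exact ((hL.eq_levelSpace hLv).symm.trans hLv).subset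
  · rintro ⟨v, hsum, hv2, rfl⟩
    obtain ⟨a, b, hab, hrange⟩ := Set.ncard_eq_two.1 hv2
    have hv : ∀ i, v i = a ∨ v i = b := fun i => by
      simpa [hrange] using Set.mem_range_self (f := v) i
    refine ⟨⟨v, ne_zero_of_ncard_range_eq_two hv2, rfl⟩,
      {t | IsTransposition t ∧ ∀ i, v (t i) = v i}, fun t ht => ht.1, ?_⟩
    rw [← levelSpace_ker_eq_range_smul hab hv hsum, levelSpace_ker_eq_iInter_hyp]

lemma exists_isWeylLine_ker_eq [CharZero k] (s : Setoid (Fin (n + 1)))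
    (hs : s.classes.ncard = 2) :
    ∃ v : Fin (n + 1) → k,
      IsWeylLine k n (Set.range fun c : k => c • v) ∧ v ≠ 0 ∧ Setoid.ker v = s := by
  have : Infinite k := CharZero.infinite k
  obtain ⟨u, hu⟩ := Setoid.exists_ker_eq (β := k) s
  have hker : Setoid.ker (center u) = s := (ker_center u).trans hu
  have h2 : (Set.range (center u)).ncard = 2 := by
    rw [Setoid.ncard_range_eq_ncard_classes_ker, hker, hs]
  exact ⟨center u, (isWeylLine_iff _).2 ⟨_, sum_center u, h2, rfl⟩,
    ne_zero_of_ncard_range_eq_two h2, hker⟩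

end WeylLine

theorem weyl_lines_iff_two_values_and_bijection_with_partitions :
    -- characterization of Weyl lines
    (∀ L : Set (Fin (n + 1) → k),
      IsWeylLine k n L ↔
        ∃ v : Fin (n + 1) → k, (∑ i, v i) = 0 ∧ (Set.range v).ncard = 2 ∧
          L = Set.range fun c : k => c • v) ∧
    -- the partition map is well defined: independent of the chosen spanning vector
    (∀ L : Set (Fin (n + 1) → k), IsWeylLine k n L →
      ∀ v w : Fin (n + 1) → k, v ≠ 0 → w ≠ 0 →
        L = (Set.range fun c : k => c • v) → L = (Set.range fun c : k => c • w) →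
        Setoid.ker v = Setoid.ker w) ∧
    -- injectivity of the partition map
    (∀ L L' : Set (Fin (n + 1) → k), IsWeylLine k n L → IsWeylLine k n L' →
      ∀ v w : Fin (n + 1) → k, v ≠ 0 → w ≠ 0 →
        L = (Set.range fun c : k => c • v) → L' = (Set.range fun c : k => c • w) →
        Setoid.ker v = Setoid.ker w → L = L') ∧
    -- surjectivity onto partitions of `Fin (n+1)` into two (nonempty) parts
    (∀ s : Setoid (Fin (n + 1)), (Setoid.classes s).ncard = 2 →
      ∃ (L : Set (Fin (n + 1) → k)) (v : Fin (n + 1) → k),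
        IsWeylLine k n L ∧ v ≠ 0 ∧ L = (Set.range fun c : k => c • v) ∧
        Setoid.ker v = s) := by
  refine ⟨isWeylLine_iff, fun L _ v w _ hw hLv hLw => ?_,
    fun L L' hL hL' v w _ _ hLv hLw hker => ?_, fun s hs => ?_⟩
  · exact ker_eq_of_range_smul_eq hw (hLv.symm.trans hLw)
  · rw [hL.eq_levelSpace hLv, hL'.eq_levelSpace hLw, hker]
  · obtain ⟨v, hL, hv0, hker⟩ := exists_isWeylLine_ker_eq (k := k) s hs
    exact ⟨_, v, hL, hv0, rfl, hker⟩

end TLpaper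
end

section
/- Let Q be a set of pairwise commuting transpositions of S_{n+1}, let s be a transposition, and set W := ⋂_{t∈Q} V_t. Then W ≠ {0}, and V_s ∩ (W ∪ s(W)) = ⋂_{t∈Q'} V_t, where Q' is defined as follows: if s commutes with every t ∈ Q, then Q' = Q ∪ {s}; if there is exactly one t ∈ Q with st ≠ ts, then Q' = (Q \ {t}) ∪ {s}; if there are exactly two distinct t, t' ∈ Q with st ≠ ts and st' ≠ t's, then Q' = (Q \ {t, t'}) ∪ {s, t t' s t' t}. (These three cases are exhaustive.) Moreover Q' is again a set of pairwise commuting transpositions, and in particular V_s ∩ (W ∪ s(W)) ≠ {0}. -/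
/-! Basic setup: type A_n geometric representation, Weyl lines, combinatorics. -/

namespace TLpaper

variable (k : Type) [Field k] [CharZero k] (n : ℕ)

/-! A nonzero vector lies in `V_t` exactly when its coordinates sum to zero, take only two values,
and differ at the two points moved by `t`. For `s = (a b)`, membership in `W` and in `s(W)` imposes
the same conditions for the elements of `Q` commuting with `s`; the others are `(a c)` or `(b d)`,
and since a vector of `V_s` takes only the values `x a ≠ x b`, the conditions they impose either
disappear or amount to `x c ≠ x d`, i.e. to membership in `V_{(c d)}`, where
`(c d) = t t' s t' t`. -/

open Equiv

section Perm

variable {α : Type} [DecidableEq α] {t t' : Perm α} {a b i : α}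

theorem IsTransposition.eq_swap_apply (ht : IsTransposition t) (hi : t i ≠ i) :
    t = swap i (t i) := by
  obtain ⟨p, q, -, rfl⟩ := ht
  rcases eq_or_ne i p with rfl | hip
  · simp
  rcases eq_or_ne i q with rfl | hiq
  · simp [swap_comm]
  · exact absurd (swap_apply_of_ne_of_ne hip hiq) hi

theorem IsTransposition.eq_of_commute (ht : IsTransposition t) (ht' : IsTransposition t')
    (hc : t * t' = t' * t) (hi : t i ≠ i) (hi' : t' i ≠ i) : t = t' := by
  rw [ht.eq_swap_apply hi, ht'.eq_swap_apply hi']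
  by_contra hne
  have hval : t i ≠ t' i := fun h => hne (by rw [h])
  have := congrArg (· i) hc
  simp only [Perm.mul_apply] at this
  rw [ht.eq_swap_apply hi, ht'.eq_swap_apply hi', swap_apply_left, swap_apply_left,
    swap_apply_of_ne_of_ne hi' (Ne.symm hval), swap_apply_of_ne_of_ne hi hval] at this
  exact hval this.symm

theorem mul_swap_eq_swap_mul_of_apply_eq {σ : Perm α} (ha : σ a = a) (hb : σ b = b) :
    σ * swap a b = swap a b * σ := by
  rw [mul_swap_eq_swap_mul, ha, hb]

theorem IsTransposition.exists_eq_swap_of_not_commute (ht : IsTransposition t)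
    (h : swap a b * t ≠ t * swap a b) :
    ∃ c, c ≠ a ∧ c ≠ b ∧ (t = swap a c ∨ t = swap b c) := by
  by_cases hta : t a = a
  · by_cases htb : t b = b
    · exact absurd (mul_swap_eq_swap_mul_of_apply_eq hta htb).symm h
    refine ⟨t b, fun hba => ?_, htb, Or.inr (ht.eq_swap_apply htb)⟩
    rw [← hta] at hba
    exact htb (t.injective hba ▸ hta)
  · refine ⟨t a, hta, fun hab => h ?_, Or.inl (ht.eq_swap_apply hta)⟩
    rw [ht.eq_swap_apply hta, hab]

theorem swap_mul_swap_mul_swap_mul_swap_mul_swap {c d : α} (hab : a ≠ b) (hda : d ≠ a)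
    (hcd : c ≠ d) : swap a c * swap b d * swap a b * swap b d * swap a c = swap c d := by
  have := swap_apply_apply (swap a c * swap b d) a b
  rw [Perm.mul_apply, Perm.mul_apply, swap_apply_of_ne_of_ne hab hda.symm, swap_apply_left,
    swap_apply_left, swap_apply_of_ne_of_ne hda hcd.symm, mul_inv_rev, swap_inv, swap_inv] at this
  rw [this]
  simp only [mul_assoc]

end Perm

section Functions

variable {α β : Type*} {x : α → β}

theorem comp_swap_eq_iff [DecidableEq α] {a b : α} : x ∘ swap a b = x ↔ x a = x b := by
  refine ⟨fun h => by simpa using (congrFun h a).symm, fun h => funext fun i => ?_⟩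
  rcases eq_or_ne i a with rfl | hia
  · simp [h]
  rcases eq_or_ne i b with rfl | hib
  · simp [h]
  · simp [swap_apply_of_ne_of_ne hia hib]

theorem comp_comp_eq_iff_of_commute {σ τ : Perm α} (h : σ * τ = τ * σ) :
    (x ∘ σ) ∘ τ = x ∘ σ ↔ x ∘ τ = x := by
  rw [Function.comp_assoc, ← Perm.coe_mul, h, Perm.coe_mul, ← Function.comp_assoc]
  exact σ.surjective.injective_comp_right.eq_iff

end Functions

section WeylVectors

variable {ι K : Type*} [Fintype ι] [Field K] {x : ι → K}

/-- The nonzero such vectors are exactly those spanning Weyl lines. -/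
def IsWeylVec (x : ι → K) : Prop :=
  ∑ i, x i = 0 ∧ ∀ i j l, x i = x j ∨ x i = x l ∨ x j = x l

theorem IsWeylVec.smul (hx : IsWeylVec x) (c : K) : IsWeylVec (c • x) := by
  refine ⟨by simp [← Finset.mul_sum, hx.1], fun i j l => ?_⟩
  rcases hx.2 i j l with h | h | h <;> simp [h]

theorem IsWeylVec.comp (hx : IsWeylVec x) (σ : Perm ι) : IsWeylVec (x ∘ σ) :=
  ⟨(Equiv.sum_comp σ x).trans hx.1, fun i j l => hx.2 (σ i) (σ j) (σ l)⟩

theorem IsWeylVec.eq_or_eq (hx : IsWeylVec x) {a b : ι} (hab : x a ≠ x b) (c : ι) :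
    x c = x a ∨ x c = x b :=
  (hx.2 c a b).imp_right fun h => h.resolve_right hab

/-- A zero-sum vector that is constant on the level sets of a two-valued `x` is an affine function
of `x`, and the zero sums force the constant term to vanish. -/
theorem IsWeylVec.exists_eq_smul [CharZero K] (hx : IsWeylVec x) {a b : ι} (hab : x a ≠ x b)
    {z : ι → K} (hz : ∑ i, z i = 0) (hzx : ∀ i j, x i = x j → z i = z j) :
    ∃ c : K, z = c • x := by
  set p := (z a - z b) / (x a - x b)
  set q := z a - p * x a
  have hzpq : ∀ i, z i = p * x i + q := by
    intro i
    rcases hx.eq_or_eq hab i with h | h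
    · rw [hzx i a h, h]; ring
    · rw [hzx i b h, h]; simp only [q, p]; field_simp; ring
  have hq : q = 0 := by
    have : Nonempty ι := ⟨a⟩
    have hcard : (Fintype.card ι : K) ≠ 0 := Nat.cast_ne_zero.2 Fintype.card_ne_zero
    simp only [hzpq, Finset.sum_add_distrib, ← Finset.mul_sum, hx.1, mul_zero, zero_add,
      Finset.sum_const, Finset.card_univ, nsmul_eq_mul] at hz
    exact (mul_eq_zero.1 hz).resolve_left hcard
  exact ⟨p, funext fun i => by simp [hzpq i, hq]⟩

/-- The zero-sum vector `m ↦ |ι| v_m² - ∑ v_i²` is constant on the level sets of `v`; if it is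
a multiple `c v`, every value of `v` is a root of `|ι| X² - c X - ∑ v_i²`, so there are at most
two. -/
theorem isWeylVec_of_forall_exists_eq_smul [CharZero K] {v : ι → K} (hv : ∑ i, v i = 0)
    (h : ∀ z : ι → K, ∑ i, z i = 0 → (∀ i j, v i = v j → z i = z j) → ∃ c : K, z = c • v) :
    IsWeylVec v := by
  refine ⟨hv, fun i j l => ?_⟩
  by_contra! hne
  obtain ⟨hij, hil, hjl⟩ := hne
  have : Nonempty ι := ⟨i⟩
  have hN : (Fintype.card ι : K) ≠ 0 := Nat.cast_ne_zero.2 Fintype.card_ne_zero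
  obtain ⟨c, hc⟩ := h (fun m => Fintype.card ι * v m ^ 2 - ∑ i, v i ^ 2)
    (by simp [Finset.sum_sub_distrib, ← Finset.mul_sum]) (fun i j hij => by simp [hij])
  have key := fun m => congrFun hc m
  simp only [Pi.smul_apply, smul_eq_mul] at key
  have e1 : (Fintype.card ι : K) * (v i + v j) = c :=
    mul_left_cancel₀ (sub_ne_zero.2 hij) (by linear_combination key i - key j)
  have e2 : (Fintype.card ι : K) * (v i + v l) = c :=
    mul_left_cancel₀ (sub_ne_zero.2 hil) (by linear_combination key i - key l)
  exact hjl (mul_left_cancel₀ hN (by linear_combination e1 - e2))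

variable [DecidableEq ι]

def blockVec (B : Finset ι) : ι → K :=
  fun i => if i ∈ B then (Bᶜ.card : K) else -(B.card : K)

theorem isWeylVec_blockVec (B : Finset ι) : IsWeylVec (blockVec (K := K) B) := by
  refine ⟨?_, fun i j l => ?_⟩
  · simp [blockVec, Finset.sum_ite, Finset.compl_eq_univ_sdiff, Finset.filter_not]
    ring
  · simp only [blockVec]
    split_ifs <;> simp

theorem blockVec_apply_ne [CharZero K] {B : Finset ι} {i j : ι} (hi : i ∈ B) (hj : j ∉ B) :
    blockVec (K := K) B i ≠ blockVec B j := by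
  have : Nonempty ι := ⟨i⟩
  have hcard : ((Bᶜ.card + B.card : ℕ) : K) ≠ 0 := by
    rw [Finset.card_compl_add_card, Nat.cast_ne_zero]
    exact Fintype.card_ne_zero
  simp only [blockVec, hi, hj, if_true, if_false]
  intro h
  exact hcard (by push_cast; linear_combination h)

end WeylVectors

section WeylLines

variable {K : Type} [Field K] [CharZero K] {n} {x : Fin (n + 1) → K} {t : Perm (Fin (n + 1))}

theorem isWeylLine_range_smul (hx : IsWeylVec x) {a b : Fin (n + 1)} (hab : x a ≠ x b) :
    IsWeylLine K n (Set.range fun c : K => c • x) := by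
  refine ⟨⟨x, fun h => hab (by simp [h]), rfl⟩, {σ | IsTransposition σ ∧ x ∘ σ = x},
    fun σ hσ => hσ.1, ?_⟩
  ext z
  simp only [Set.mem_range, Set.mem_inter_iff, Set.mem_ofPred_eq, Set.mem_iInter, Hyp]
  constructor
  · rintro ⟨c, rfl⟩
    have hsum : ∑ i, (c • x) i = 0 := (hx.smul c).1
    exact ⟨hsum, fun σ hσ => ⟨hsum, fun i => by simp [show x (σ i) = x i from congrFun hσ.2 i]⟩⟩
  · rintro ⟨hz, hzT⟩
    obtain ⟨c, hc⟩ := hx.exists_eq_smul hab hz fun i j hij => by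
      rcases eq_or_ne i j with rfl | hne
      · rfl
      · simpa using ((hzT (swap i j) ⟨⟨i, j, hne, rfl⟩, comp_swap_eq_iff.2 hij⟩).2 i).symm
    exact ⟨c, hc.symm⟩

theorem IsWeylLine.exists_isWeylVec {L : Set (Fin (n + 1) → K)} (hL : IsWeylLine K n L) :
    ∃ v, IsWeylVec v ∧ L = Set.range fun c : K => c • v := by
  obtain ⟨⟨v, -, rfl⟩, T, -, hLT⟩ := hL
  have hmem : ∀ z, z ∈ Set.range (fun c : K => c • v) ↔
      ∑ i, z i = 0 ∧ ∀ t ∈ T, ∀ i, z (t i) = z i := by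
    intro z
    rw [hLT]
    simp only [Set.mem_inter_iff, Set.mem_ofPred_eq, Set.mem_iInter, Hyp]
    exact ⟨fun h => ⟨h.1, fun t ht => (h.2 t ht).2⟩, fun h => ⟨h.1, fun t ht => ⟨h.1, h.2 t ht⟩⟩⟩
  have hv := (hmem v).1 ⟨1, one_smul _ _⟩
  refine ⟨v, isWeylVec_of_forall_exists_eq_smul hv.1 fun z hz hzv => ?_, rfl⟩
  obtain ⟨c, hc⟩ := (hmem z).2 ⟨hz, fun t ht i => hzv _ _ (hv.2 t ht i)⟩
  exact ⟨c, hc.symm⟩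

theorem range_smul_subset_Vt (hx : IsWeylVec x) (ht : x ∘ t ≠ x) :
    (Set.range fun c : K => c • x) ⊆ Vt K n t := by
  obtain ⟨i, hi⟩ := Function.ne_iff.1 ht
  refine Set.subset_biUnion_of_mem (u := id) ⟨isWeylLine_range_smul hx hi, fun h => ht ?_⟩
  exact funext (h ⟨1, one_smul _ _⟩).2

theorem mem_Vt_iff (ht : IsTransposition t) : x ∈ Vt K n t ↔ x = 0 ∨ IsWeylVec x ∧ x ∘ t ≠ x := by
  constructor
  · intro hx
    simp only [Vt, Set.mem_iUnion, exists_prop, Set.mem_ofPred_eq] at hx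
    obtain ⟨L, ⟨hL, hLt⟩, hxL⟩ := hx
    obtain ⟨v, hv, rfl⟩ := hL.exists_isWeylVec
    obtain ⟨c, rfl⟩ := hxL
    have hvt : v ∘ t ≠ v := fun h => hLt (by
      rintro _ ⟨d, rfl⟩
      exact ⟨(hv.smul d).1, fun i => by simp [show v (t i) = v i from congrFun h i]⟩)
    rcases eq_or_ne c 0 with rfl | hc
    · simp
    · exact Or.inr ⟨hv.smul c, fun h => hvt (smul_right_injective _ hc h)⟩
  · rintro (rfl | ⟨hx, hxt⟩)
    · obtain ⟨a, b, hab, rfl⟩ := ht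
      have hsep := blockVec_apply_ne (K := K) (Finset.mem_singleton_self a)
        (Finset.notMem_singleton.2 hab.symm)
      exact range_smul_subset_Vt (isWeylVec_blockVec _) (comp_swap_eq_iff.not.2 hsep)
        ⟨0, zero_smul _ _⟩
    · exact range_smul_subset_Vt hx hxt ⟨1, one_smul _ _⟩

variable {Q : Set (Perm (Fin (n + 1)))}

theorem mem_iInter_Vt_iff (hQ : ∀ t ∈ Q, IsTransposition t) (hx : x ≠ 0) :
    x ∈ ⋂ t ∈ Q, Vt K n t ↔ ∀ t ∈ Q, IsWeylVec x ∧ x ∘ t ≠ x := by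
  simp only [Set.mem_iInter₂]
  exact forall₂_congr fun t ht => (mem_Vt_iff (hQ t ht)).trans (or_iff_right hx)

theorem zero_mem_iInter_Vt (hQ : ∀ t ∈ Q, IsTransposition t) :
    (0 : Fin (n + 1) → K) ∈ ⋂ t ∈ Q, Vt K n t :=
  Set.mem_iInter₂.2 fun t ht => (mem_Vt_iff (hQ t ht)).2 (Or.inl rfl)

end WeylLines

section CommTranspositions

variable {n} {P Q : Set (Perm (Fin (n + 1)))} {t t' : Perm (Fin (n + 1))}

theorem CommTranspositions.mono (hQ : CommTranspositions n Q) (hPQ : P ⊆ Q) :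
    CommTranspositions n P :=
  ⟨fun t ht => hQ.1 t (hPQ ht), fun t ht t' ht' => hQ.2 t (hPQ ht) t' (hPQ ht')⟩

theorem CommTranspositions.union (hP : CommTranspositions n P) (hQ : CommTranspositions n Q)
    (hPQ : ∀ t ∈ P, ∀ t' ∈ Q, t * t' = t' * t) : CommTranspositions n (P ∪ Q) := by
  refine ⟨by rintro t (ht | ht); exacts [hP.1 t ht, hQ.1 t ht], ?_⟩
  rintro t (ht | ht) t' (ht' | ht')
  exacts [hP.2 t ht t' ht', hPQ t ht t' ht', (hPQ t' ht' t ht).symm, hQ.2 t ht t' ht']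

theorem commTranspositions_singleton (ht : IsTransposition t) : CommTranspositions n {t} :=
  ⟨by simpa using ht, by simp⟩

theorem commTranspositions_pair (ht : IsTransposition t) (ht' : IsTransposition t')
    (h : t * t' = t' * t) : CommTranspositions n {t, t'} :=
  ⟨by simp [ht, ht'], by rintro u (rfl | rfl) v (rfl | rfl) <;> simp [h]⟩

theorem CommTranspositions.apply_eq_of_apply_ne (hQ : CommTranspositions n Q) (ht : t ∈ Q)
    (ht' : t' ∈ Q) (hne : t ≠ t') {i : Fin (n + 1)} (hi : t i ≠ i) : t' i = i := by
  by_contra hi'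
  exact hne ((hQ.1 t ht).eq_of_commute (hQ.1 t' ht') (hQ.2 t ht t' ht') hi hi')

theorem CommTranspositions.exists_forall_apply_ne_eq (hQ : CommTranspositions n Q)
    (i : Fin (n + 1)) : ∃ t, ∀ r ∈ Q, r i ≠ i → r = t := by
  by_cases h : ∃ t ∈ Q, t i ≠ i
  · obtain ⟨t, ht, hti⟩ := h
    exact ⟨t, fun r hr hri => (hQ.1 r hr).eq_of_commute (hQ.1 t ht) (hQ.2 r hr t ht) hri hti⟩
  · push Not at h
    exact ⟨1, fun r hr hri => absurd (h r hr) hri⟩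

theorem CommTranspositions.exists_pair_of_not_commute (hQ : CommTranspositions n Q)
    (a b : Fin (n + 1)) :
    ∃ t t', ∀ r ∈ Q, swap a b * r ≠ r * swap a b → r = t ∨ r = t' := by
  obtain ⟨t, ht⟩ := hQ.exists_forall_apply_ne_eq a
  obtain ⟨t', ht'⟩ := hQ.exists_forall_apply_ne_eq b
  refine ⟨t, t', fun r hr hnc => ?_⟩
  obtain ⟨c, hca, hcb, rfl | rfl⟩ := (hQ.1 r hr).exists_eq_swap_of_not_commute hnc
  · exact Or.inl (ht _ hr (by simpa using hca))
  · exact Or.inr (ht' _ hr (by simpa using hcb))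

theorem CommTranspositions.le_apply_of_lt_apply (hQ : CommTranspositions n Q) (ht : t ∈ Q)
    (ht' : t' ∈ Q) {i : Fin (n + 1)} (hi : i < t i) : i ≤ t' i := by
  rcases eq_or_ne t t' with rfl | hne
  · exact hi.le
  · exact (hQ.apply_eq_of_apply_ne ht ht' hne hi.ne').ge

/-- Colour `i` by whether no element of `Q` moves it down: every `t ∈ Q` then joins the two
colours, since it moves its smaller point up and no other element of `Q` moves that point. -/
theorem CommTranspositions.exists_isWeylVec {K : Type} [Field K] [CharZero K]
    (hQ : CommTranspositions n Q) :
    ∃ x : Fin (n + 1) → K, IsWeylVec x ∧ ∀ t ∈ Q, x ∘ t ≠ x := by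
  classical
  set B := Finset.univ.filter fun i : Fin (n + 1) => ∀ t ∈ Q, i ≤ t i
  refine ⟨blockVec B, isWeylVec_blockVec B, fun t ht => ?_⟩
  obtain ⟨p, q, hpq, rfl⟩ := hQ.1 t ht
  rw [Ne, comp_swap_eq_iff]
  wlog hlt : p < q generalizing p q
  · rw [swap_comm] at ht
    exact Ne.symm (this q p hpq.symm ht (lt_of_le_of_ne (not_lt.1 hlt) hpq.symm))
  have hp : p ∈ B := by
    simp only [B, Finset.mem_filter, Finset.mem_univ, true_and]
    exact fun t' ht' => hQ.le_apply_of_lt_apply ht ht' (by simpa using hlt)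
  have hq : q ∉ B := by
    simp only [B, Finset.mem_filter, Finset.mem_univ, true_and, not_forall, not_le]
    exact ⟨swap p q, ht, by simpa using hlt⟩
  exact blockVec_apply_ne hp hq

theorem iInter_Vt_ne_zero {K : Type} [Field K] [CharZero K] (hQ : CommTranspositions n Q) :
    (⋂ t ∈ Q, Vt K n t) ≠ {0} := by
  rcases Q.eq_empty_or_nonempty with rfl | ⟨t, ht⟩
  · intro h
    have h1 : (1 : Fin (n + 1) → K) ∈ ⋂ t ∈ (∅ : Set (Perm (Fin (n + 1)))), Vt K n t := by simp
    rw [h] at h1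
    simp at h1
  obtain ⟨x, hx, hxQ⟩ := hQ.exists_isWeylVec (K := K)
  have hx0 : x ≠ 0 := fun h => hxQ t ht (by simp [h])
  intro h
  apply hx0
  rw [← Set.mem_singleton_iff, ← h, mem_iInter_Vt_iff hQ.1 hx0]
  exact fun t ht => ⟨hx, hxQ t ht⟩

end CommTranspositions

theorem mem_permSet_iff {K : Type} {n : ℕ} {σ : Perm (Fin (n + 1))} {W : Set (Fin (n + 1) → K)}
    {x : Fin (n + 1) → K} : x ∈ permSet K n σ W ↔ x ∘ ⇑σ⁻¹ ∈ W := by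
  constructor
  · rintro ⟨w, hw, rfl⟩
    simpa [Function.comp_assoc] using hw
  · exact fun h => ⟨x ∘ ⇑σ⁻¹, h, by simp [Function.comp_assoc]⟩

section DotAction

variable {K : Type} [Field K] [CharZero K] {n} {Q : Set (Perm (Fin (n + 1)))} {a b : Fin (n + 1)}

theorem mem_dot_iff (hQ : ∀ t ∈ Q, IsTransposition t) (hab : a ≠ b) {x : Fin (n + 1) → K}
    (hx : x ≠ 0) :
    x ∈ Vt K n (swap a b) ∩ ((⋂ t ∈ Q, Vt K n t) ∪ permSet K n (swap a b) (⋂ t ∈ Q, Vt K n t)) ↔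
      IsWeylVec x ∧ x a ≠ x b ∧
        ((∀ t ∈ Q, x ∘ t ≠ x) ∨ ∀ t ∈ Q, (x ∘ swap a b) ∘ t ≠ x ∘ swap a b) := by
  have hxs : x ∘ swap a b ≠ 0 := fun h =>
    hx (funext fun i => by simpa using congrFun h (swap a b i))
  rw [Set.mem_inter_iff, Set.mem_union, mem_permSet_iff, swap_inv, mem_Vt_iff ⟨a, b, hab, rfl⟩,
    or_iff_right hx, mem_iInter_Vt_iff hQ hx, mem_iInter_Vt_iff hQ hxs, Ne, comp_swap_eq_iff]
  constructor
  · rintro ⟨⟨hw, hxab⟩, h | h⟩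
    exacts [⟨hw, hxab, Or.inl fun t ht => (h t ht).2⟩, ⟨hw, hxab, Or.inr fun t ht => (h t ht).2⟩]
  · rintro ⟨hw, hxab, h | h⟩
    exacts [⟨⟨hw, hxab⟩, Or.inl fun t ht => ⟨hw, h t ht⟩⟩,
      ⟨⟨hw, hxab⟩, Or.inr fun t ht => ⟨hw.comp _, h t ht⟩⟩]

theorem dot_eq_iInter_Vt (hQ : ∀ t ∈ Q, IsTransposition t) (hab : a ≠ b)
    {N R : Set (Perm (Fin (n + 1)))} (hNQ : N ⊆ Q) (hR : ∀ r ∈ R, IsTransposition r)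
    (hcomm : ∀ t ∈ Q \ N, swap a b * t = t * swap a b)
    (hNR : ∀ x : Fin (n + 1) → K, IsWeylVec x → x a ≠ x b →
      (((∀ t ∈ N, x ∘ t ≠ x) ∨ ∀ t ∈ N, (x ∘ swap a b) ∘ t ≠ x ∘ swap a b) ↔
        ∀ r ∈ R, x ∘ r ≠ x)) :
    Vt K n (swap a b) ∩ ((⋂ t ∈ Q, Vt K n t) ∪ permSet K n (swap a b) (⋂ t ∈ Q, Vt K n t)) =
      ⋂ r ∈ (Q \ N) ∪ insert (swap a b) R, Vt K n r := by
  have hQ' : ∀ r ∈ (Q \ N) ∪ insert (swap a b) R, IsTransposition r := by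
    rintro r (hr | rfl | hr)
    exacts [hQ r hr.1, ⟨a, b, hab, rfl⟩, hR r hr]
  ext x
  rcases eq_or_ne x 0 with rfl | hx
  · exact iff_of_true ⟨(mem_Vt_iff ⟨a, b, hab, rfl⟩).2 (Or.inl rfl),
      Or.inl (zero_mem_iInter_Vt hQ)⟩ (zero_mem_iInter_Vt hQ')
  rw [mem_dot_iff hQ hab hx, mem_iInter_Vt_iff hQ' hx]
  have hsame : ∀ t ∈ Q \ N, (x ∘ swap a b) ∘ t ≠ x ∘ swap a b ↔ x ∘ t ≠ x :=
    fun t ht => (comp_comp_eq_iff_of_commute (hcomm t ht)).not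
  constructor
  · rintro ⟨hw, hxab, h⟩ r hr
    refine ⟨hw, ?_⟩
    rcases hr with hr | rfl | hr
    · rcases h with h | h
      exacts [h r hr.1, (hsame r hr).1 (h r hr.1)]
    · exact comp_swap_eq_iff.not.2 hxab
    · exact (hNR x hw hxab).1 (h.imp (fun h t ht => h t (hNQ ht)) fun h t ht => h t (hNQ ht)) r hr
  · intro h
    obtain ⟨hw, hs⟩ := h _ (Or.inr (Or.inl rfl))
    have hxab : x a ≠ x b := comp_swap_eq_iff.not.1 hs
    have hrest : ∀ t ∈ Q \ N, x ∘ t ≠ x := fun t ht => (h t (Or.inl ht)).2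
    refine ⟨hw, hxab, ?_⟩
    rcases (hNR x hw hxab).2 fun r hr => (h r (Or.inr (Or.inr hr))).2 with hN | hN
    · refine Or.inl fun t ht => ?_
      by_cases htN : t ∈ N
      exacts [hN t htN, hrest t ⟨ht, htN⟩]
    · refine Or.inr fun t ht => ?_
      by_cases htN : t ∈ N
      exacts [hN t htN, (hsame t ⟨ht, htN⟩).2 (hrest t ⟨ht, htN⟩)]

theorem dot_eq_of_forall_commute (hQ : CommTranspositions n Q) (hab : a ≠ b)
    (hall : ∀ t ∈ Q, swap a b * t = t * swap a b) :
    Vt K n (swap a b) ∩ ((⋂ t ∈ Q, Vt K n t) ∪ permSet K n (swap a b) (⋂ t ∈ Q, Vt K n t)) =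
      ⋂ t ∈ Q ∪ {swap a b}, Vt K n t ∧
    CommTranspositions n (Q ∪ {swap a b}) := by
  have h := dot_eq_iInter_Vt (K := K) (R := ∅) hQ.1 hab (Set.empty_subset Q) (by simp)
    (fun t ht => hall t ht.1) (by simp)
  rw [Set.sdiff_empty, LawfulSingleton.insert_empty_eq] at h
  exact ⟨h, hQ.union (commTranspositions_singleton ⟨a, b, hab, rfl⟩)
    fun t ht _ hs => hs ▸ (hall t ht).symm⟩

theorem dot_eq_of_unique_not_commute (hQ : CommTranspositions n Q) (hab : a ≠ b)
    {t : Perm (Fin (n + 1))} (ht : t ∈ Q) (hnc : swap a b * t ≠ t * swap a b)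
    (hother : ∀ t' ∈ Q, t' ≠ t → swap a b * t' = t' * swap a b) :
    Vt K n (swap a b) ∩ ((⋂ r ∈ Q, Vt K n r) ∪ permSet K n (swap a b) (⋂ r ∈ Q, Vt K n r)) =
      ⋂ r ∈ (Q \ {t}) ∪ {swap a b}, Vt K n r ∧
    CommTranspositions n ((Q \ {t}) ∪ {swap a b}) := by
  obtain ⟨c, hca, hcb, hc⟩ := (hQ.1 t ht).exists_eq_swap_of_not_commute hnc
  have hcomm : ∀ t' ∈ Q \ {t}, swap a b * t' = t' * swap a b := fun t' ht' => hother t' ht'.1 ht'.2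
  have h := dot_eq_iInter_Vt (K := K) (R := ∅) hQ.1 hab (Set.singleton_subset_iff.2 ht)
    (by simp) hcomm fun x _ hxab => by
      simp only [Set.mem_singleton_iff, forall_eq, Set.mem_empty_iff_false, IsEmpty.forall_iff,
        forall_const, iff_true]
      rcases hc with rfl | rfl <;>
        simp only [Ne, comp_swap_eq_iff, Function.comp_apply, swap_apply_left, swap_apply_right,
          swap_apply_of_ne_of_ne hca hcb] <;>
        by_contra! h <;> exact hxab (by rw [h.1, h.2])
  rw [LawfulSingleton.insert_empty_eq] at h
  exact ⟨h, (hQ.mono Set.sdiff_subset).union (commTranspositions_singleton ⟨a, b, hab, rfl⟩)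
    fun t' ht' _ hs => hs ▸ (hcomm t' ht').symm⟩

theorem dot_eq_of_not_commute_swap_swap (hQ : CommTranspositions n Q) (hab : a ≠ b)
    {c d : Fin (n + 1)} (hca : c ≠ a) (hcb : c ≠ b) (hda : d ≠ a) (hdb : d ≠ b) (hcd : c ≠ d)
    (hac : swap a c ∈ Q) (hbd : swap b d ∈ Q) :
    Vt K n (swap a b) ∩ ((⋂ r ∈ Q, Vt K n r) ∪ permSet K n (swap a b) (⋂ r ∈ Q, Vt K n r)) =
      ⋂ r ∈ (Q \ {swap a c, swap b d}) ∪
        {swap a b, swap a c * swap b d * swap a b * swap b d * swap a c}, Vt K n r ∧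
    CommTranspositions n ((Q \ {swap a c, swap b d}) ∪
      {swap a b, swap a c * swap b d * swap a b * swap b d * swap a c}) := by
  rw [swap_mul_swap_mul_swap_mul_swap_mul_swap hab hda hcd]
  have hfix : ∀ r ∈ Q \ {swap a c, swap b d}, r a = a ∧ r b = b ∧ r c = c ∧ r d = d := by
    rintro r ⟨hr, hne⟩
    simp only [Set.mem_insert_iff, Set.mem_singleton_iff, not_or] at hne
    exact ⟨hQ.apply_eq_of_apply_ne hac hr (Ne.symm hne.1) (by simpa using hca),
      hQ.apply_eq_of_apply_ne hbd hr (Ne.symm hne.2) (by simpa using hdb),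
      hQ.apply_eq_of_apply_ne hac hr (Ne.symm hne.1) (by simpa using hca.symm),
      hQ.apply_eq_of_apply_ne hbd hr (Ne.symm hne.2) (by simpa using hdb.symm)⟩
  have hcomm : ∀ r ∈ Q \ {swap a c, swap b d}, swap a b * r = r * swap a b :=
    fun r hr => (mul_swap_eq_swap_mul_of_apply_eq (hfix r hr).1 (hfix r hr).2.1).symm
  refine ⟨dot_eq_iInter_Vt hQ.1 hab (Set.insert_subset hac (Set.singleton_subset_iff.2 hbd))
    (by simpa using ⟨c, d, hcd, rfl⟩) hcomm fun x hx hxab => ?_, ?_⟩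
  · simp only [Set.forall_mem_insert, Set.mem_singleton_iff, forall_eq, Ne, comp_swap_eq_iff,
      Function.comp_apply, swap_apply_left, swap_apply_right, swap_apply_of_ne_of_ne hca hcb,
      swap_apply_of_ne_of_ne hda hdb]
    rcases hx.eq_or_eq hxab c with hc | hc <;> rcases hx.eq_or_eq hxab d with hd | hd <;>
      simp [hc, hd, hxab, hxab.symm]
  · refine (hQ.mono Set.sdiff_subset).union (commTranspositions_pair ⟨a, b, hab, rfl⟩
      ⟨c, d, hcd, rfl⟩ (mul_swap_eq_swap_mul_of_apply_eq (swap_apply_of_ne_of_ne hca hcb)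
        (swap_apply_of_ne_of_ne hda hdb))) ?_
    rintro r hr _ (rfl | rfl)
    exacts [(hcomm r hr).symm, mul_swap_eq_swap_mul_of_apply_eq (hfix r hr).2.2.1 (hfix r hr).2.2.2]

theorem dot_eq_of_two_not_commute (hQ : CommTranspositions n Q) (hab : a ≠ b)
    {t t' : Perm (Fin (n + 1))} (ht : t ∈ Q) (ht' : t' ∈ Q) (htt' : t ≠ t')
    (hnc : swap a b * t ≠ t * swap a b) (hnc' : swap a b * t' ≠ t' * swap a b) :
    Vt K n (swap a b) ∩ ((⋂ r ∈ Q, Vt K n r) ∪ permSet K n (swap a b) (⋂ r ∈ Q, Vt K n r)) =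
      ⋂ r ∈ (Q \ {t, t'}) ∪ {swap a b, t * t' * swap a b * t' * t}, Vt K n r ∧
    CommTranspositions n ((Q \ {t, t'}) ∪ {swap a b, t * t' * swap a b * t' * t}) := by
  obtain ⟨c, hca, hcb, hc⟩ := (hQ.1 t ht).exists_eq_swap_of_not_commute hnc
  obtain ⟨d, hda, hdb, hd⟩ := (hQ.1 t' ht').exists_eq_swap_of_not_commute hnc'
  have hdisj : ∀ i, t i ≠ i → t' i = i := fun i => hQ.apply_eq_of_apply_ne ht ht' htt'
  rcases hc with rfl | rfl <;> rcases hd with rfl | rfl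
  · exact absurd (hdisj a (by simpa using hca)) (by simpa using hda)
  · have hcd : c ≠ d := by
      rintro rfl
      exact absurd (hdisj c (by simpa using hca.symm)) (by simpa using hdb.symm)
    exact dot_eq_of_not_commute_swap_swap hQ hab hca hcb hda hdb hcd ht ht'
  · have hcd : c ≠ d := by
      rintro rfl
      exact absurd (hdisj c (by simpa using hcb.symm)) (by simpa using hda.symm)
    rw [swap_comm a b]
    exact dot_eq_of_not_commute_swap_swap hQ hab.symm hcb hca hdb hda hcd ht ht'
  · exact absurd (hdisj b (by simpa using hcb)) (by simpa using hdb)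

end DotAction

theorem dotAct_of_inter_Vt
    (Q : Set (Equiv.Perm (Fin (n + 1)))) (hQ : CommTranspositions n Q)
    (s : Equiv.Perm (Fin (n + 1))) (hs : IsTransposition s) :
    (⋂ t ∈ Q, Vt k n t) ≠ {0} ∧
    -- rule 1: `s` commutes with every element of `Q`
    ((∀ t ∈ Q, s * t = t * s) →
      Vt k n s ∩ ((⋂ t ∈ Q, Vt k n t) ∪ permSet k n s (⋂ t ∈ Q, Vt k n t)) =
        ⋂ t ∈ (Q ∪ {s}), Vt k n t ∧
      CommTranspositions n (Q ∪ {s})) ∧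
    -- rule 2: there is exactly one `t ∈ Q` not commuting with `s`
    (∀ t ∈ Q, s * t ≠ t * s → (∀ t' ∈ Q, t' ≠ t → s * t' = t' * s) →
      Vt k n s ∩ ((⋂ r ∈ Q, Vt k n r) ∪ permSet k n s (⋂ r ∈ Q, Vt k n r)) =
        ⋂ r ∈ ((Q \ {t}) ∪ {s}), Vt k n r ∧
      CommTranspositions n ((Q \ {t}) ∪ {s})) ∧
    -- rule 3: there are exactly two distinct `t, t' ∈ Q` not commuting with `s`
    (∀ t ∈ Q, ∀ t' ∈ Q, t ≠ t' → s * t ≠ t * s → s * t' ≠ t' * s →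
      Vt k n s ∩ ((⋂ r ∈ Q, Vt k n r) ∪ permSet k n s (⋂ r ∈ Q, Vt k n r)) =
        ⋂ r ∈ ((Q \ {t, t'}) ∪ {s, t * t' * s * t' * t}), Vt k n r ∧
      CommTranspositions n ((Q \ {t, t'}) ∪ {s, t * t' * s * t' * t})) ∧
    -- the three cases are exhaustive: at most two elements of `Q` fail to commute with `s`
    (∃ t t' : Equiv.Perm (Fin (n + 1)), ∀ r ∈ Q, s * r ≠ r * s → r = t ∨ r = t') ∧
    -- in particular `s · W ≠ {0}`
    Vt k n s ∩ ((⋂ t ∈ Q, Vt k n t) ∪ permSet k n s (⋂ t ∈ Q, Vt k n t)) ≠ {0} := by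
  obtain ⟨a, b, hab, rfl⟩ := hs
  refine ⟨iInter_Vt_ne_zero hQ, dot_eq_of_forall_commute hQ hab,
    fun t ht => dot_eq_of_unique_not_commute hQ hab ht,
    fun t ht t' ht' => dot_eq_of_two_not_commute hQ hab ht ht', hQ.exists_pair_of_not_commute a b,
    ?_⟩
  by_cases hall : ∀ t ∈ Q, swap a b * t = t * swap a b
  · obtain ⟨h, hQ'⟩ := dot_eq_of_forall_commute (K := k) hQ hab hall
    exact h ▸ iInter_Vt_ne_zero hQ'
  push Not at hall
  obtain ⟨t, ht, hnc⟩ := hall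
  by_cases hother : ∀ t' ∈ Q, t' ≠ t → swap a b * t' = t' * swap a b
  · obtain ⟨h, hQ'⟩ := dot_eq_of_unique_not_commute (K := k) hQ hab ht hnc hother
    exact h ▸ iInter_Vt_ne_zero hQ'
  push Not at hother
  obtain ⟨t', ht', htt', hnc'⟩ := hother
  obtain ⟨h, hQ'⟩ := dot_eq_of_two_not_commute (K := k) hQ hab ht ht' htt'.symm hnc hnc'
  exact h ▸ iInter_Vt_ne_zero hQ'

end TLpaper
end

section
/- For every 1 ≤ i ≤ n, the pair (1, f_i) is a basis of O(V_i) as a module over its fixed subalgebra O(V_i)^{s_i} (i.e., O(V_i) = O(V_i)^{s_i} ⊕ O(V_i)^{s_i}·f_i, free of rank 2). Consequently the bimodule B_i := O(V_i) ⊗_{O(V_i)^{s_i}} O(V_i) is free of rank 2 as a left O(V_i)-module and free of rank 2 as a right O(V_i)-module. -/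
/-!
Every point of `V_i` lies on a Weyl line `k • v ⊆ V_i` with `v_i ≠ v_{i+1}`. If `f_i g` vanishes
on `V_i`, then `g` vanishes on each such line minus the origin, hence (as `k` is infinite) on the
whole line: `f_i` is a non-zero-divisor of `O(V_i)`. Modulo `X_i - X_{i+1}` the swap `s_i` acts
trivially on polynomials, so `f_i` divides `x - s_i x` for every `x`, say `x - s_i x = f_i h`;
regularity of `f_i` forces `h` to be invariant. Since `2` is invertible,
`x = (x + s_i x)/2 + (h/2) f_i` with invariant coefficients, and applying `s_i` to two such
decompositions shows they agree. Base change of the resulting basis `(1, f_i)` along either factor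
gives bases of `B_i`.
-/

/-! Basic setup: type A_n geometric representation, Weyl lines, combinatorics. -/

set_option linter.unusedSectionVars false
set_option synthInstance.maxHeartbeats 1000000
set_option maxHeartbeats 1000000

namespace TLpaper

variable (k : Type) [Field k] [CharZero k] (n : ℕ)

/-! Coordinate rings of subvarieties of `k^{n+1}`. -/

noncomputable section

/-- The ring `O(X)` of regular functions on `X`: the quotient of the polynomial ring
`k[X_0, …, X_n]` by the vanishing ideal of `X`. -/
def O (X : Set (Fin (n + 1) → k)) : Type :=
  MvPolynomial (Fin (n + 1)) k ⧸ MvPolynomial.vanishingIdeal k X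

instance (X : Set (Fin (n + 1) → k)) : CommRing (O k n X) :=
  inferInstanceAs (CommRing (MvPolynomial (Fin (n + 1)) k ⧸ MvPolynomial.vanishingIdeal k X))

theorem vanishingIdeal_anti {X Y : Set (Fin (n + 1) → k)} (h : X ⊆ Y) :
    MvPolynomial.vanishingIdeal k Y ≤ MvPolynomial.vanishingIdeal k X := fun p hp => by
  rw [MvPolynomial.mem_vanishingIdeal_iff] at hp ⊢
  exact fun x hx => hp x (h hx)

/-- The (surjective) restriction homomorphism `O(Y) → O(X)` for `X ⊆ Y`. -/
def res {X Y : Set (Fin (n + 1) → k)} (h : X ⊆ Y) : O k n Y →+* O k n X :=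
  Ideal.Quotient.factor (vanishingIdeal_anti k n h)

open Classical in
/-- The ring endomorphism of `O(X)` induced by a permutation `σ` of the coordinates
(when `X` is `σ`-stable; the definition branches on this (true, in our uses)
stability condition to be total). -/
def permO (σ : Equiv.Perm (Fin (n + 1))) (X : Set (Fin (n + 1) → k)) :
    O k n X →+* O k n X :=
  if h : ∀ x ∈ X, x ∘ σ ∈ X then
    Ideal.Quotient.lift _
      ((Ideal.Quotient.mk _).comp (MvPolynomial.rename (R := k) ⇑σ).toRingHom)
      (fun p hp => by
        have hmem : (MvPolynomial.rename (R := k) ⇑σ) p ∈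
            MvPolynomial.vanishingIdeal k X := by
          rw [MvPolynomial.mem_vanishingIdeal_iff]
          intro x hx
          rw [MvPolynomial.aeval_rename]
          exact (MvPolynomial.mem_vanishingIdeal_iff.1 hp) _ (h x hx)
        exact Ideal.Quotient.eq_zero_iff_mem.2 hmem)
  else RingHom.id _

/-- The fixed subalgebra `O(V_i)^{s_i}` of `O(V_i)` under the automorphism induced
by the simple transposition `s_i`. -/
def fixedO (i : ℕ) : Subring (O k n (Vi k n i)) :=
  RingHom.eqLocus (permO k n (simple n i) (Vi k n i)) (RingHom.id _)

open Fin.NatCast in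
/-- The image `f_i` of `X_i − X_{i+1}` in the coordinate ring `O(X)`. -/
def fbar (X : Set (Fin (n + 1) → k)) (i : ℕ) : O k n X :=
  Ideal.Quotient.mk _
    (MvPolynomial.X (i : Fin (n + 1)) - MvPolynomial.X ((i + 1 : ℕ) : Fin (n + 1)))

theorem Vt_subset_ZZ (t : Equiv.Perm (Fin (n + 1))) : Vt k n t ⊆ ZZ k n := by
  refine Set.iUnion₂_subset fun L hL => ?_
  exact Set.subset_iUnion₂ (s := fun L _ => L) L hL.1

theorem Vi_subset_ZZ (i : ℕ) : Vi k n i ⊆ ZZ k n := Vt_subset_ZZ k n _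

theorem seqSet_subset_ZZ : ∀ l : List ℕ, seqSet k n l ⊆ ZZ k n
  | [] => subset_rfl
  | [_] => Vi_subset_ZZ k n _
  | _ :: _ :: _ => Set.inter_subset_left.trans (Vi_subset_ZZ k n _)

end

open scoped TensorProduct

/-- `S` is free of rank `m` as a module over `R`, the action being through the ring
homomorphism `f : R →+* S` (i.e. `r • x := f r * x`): there is a basis of size `m`. -/
def FreeRankVia {R S : Type} [CommRing R] [CommRing S] (f : R →+* S) (m : ℕ) : Prop :=
  ∃ b : Fin m → S, ∀ x : S, ∃! c : Fin m → R, x = ∑ j, f (c j) * b j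

open MvPolynomial

section WeylLines

omit [CharZero k]
variable {k n}

theorem comp_mem_Hyp_iff (σ t : Equiv.Perm (Fin (n + 1))) (x : Fin (n + 1) → k) :
    x ∘ σ ∈ Hyp k n t ↔ x ∈ Hyp k n (σ * t * σ⁻¹) := by
  simp only [Hyp, Set.mem_ofPred_eq, Function.comp_apply, Equiv.sum_comp σ x]
  refine and_congr_right fun _ => ?_
  rw [← σ.forall_congr_right (q := fun j => x ((σ * t * σ⁻¹) j) = x j)]
  simp

theorem IsWeylLine.preimage_comp {L : Set (Fin (n + 1) → k)} (hL : IsWeylLine k n L)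
    (σ : Equiv.Perm (Fin (n + 1))) : IsWeylLine k n ((· ∘ σ) ⁻¹' L) := by
  obtain ⟨⟨v, hv, hLv⟩, T, hT, hLT⟩ := hL
  refine ⟨⟨v ∘ ⇑σ⁻¹, fun h => hv ?_, ?_⟩, (fun t => σ * t * σ⁻¹) '' T, ?_, ?_⟩
  · ext j
    simpa using congrFun h (σ j)
  · ext y
    simp only [hLv, Set.mem_preimage, Set.mem_range]
    refine exists_congr fun c => ?_
    rw [Equiv.Perm.inv_def, ← Pi.smul_comp, Equiv.comp_symm_eq, eq_comm]
  · rintro _ ⟨t, ht, rfl⟩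
    obtain ⟨a, b, hab, rfl⟩ := hT t ht
    exact ⟨σ a, σ b, σ.injective.ne hab, (Equiv.swap_apply_apply σ a b).symm⟩
  · ext y
    simp only [hLT, Set.mem_preimage, Set.mem_inter_iff, Set.mem_iInter, Set.mem_ofPred_eq,
      Set.forall_mem_image, comp_mem_Hyp_iff, Function.comp_apply, Equiv.sum_comp σ y]

theorem comp_mem_Vt {t : Equiv.Perm (Fin (n + 1))} {x : Fin (n + 1) → k} (hx : x ∈ Vt k n t)
    (σ : Equiv.Perm (Fin (n + 1))) : x ∘ σ ∈ Vt k n (σ⁻¹ * t * σ) := by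
  obtain ⟨L, ⟨hL, hLt⟩, hxL⟩ := Set.mem_iUnion₂.1 hx
  refine Set.mem_iUnion₂.2
    ⟨(· ∘ ⇑σ⁻¹) ⁻¹' L, ⟨hL.preimage_comp σ⁻¹, fun hsub => hLt fun y hy => ?_⟩, ?_⟩
  · have hyσ : (y ∘ σ) ∘ ⇑σ⁻¹ ∈ L := by simpa [Function.comp_assoc] using hy
    simpa [mul_assoc] using (comp_mem_Hyp_iff σ _ y).1 (hsub hyσ)
  · simpa [Function.comp_assoc] using hxL

theorem comp_self_mem_Vt {t : Equiv.Perm (Fin (n + 1))} {x : Fin (n + 1) → k}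
    (hx : x ∈ Vt k n t) : x ∘ t ∈ Vt k n t := by
  simpa using comp_mem_Vt hx t

theorem exists_line_of_mem_Vt_swap {a b : Fin (n + 1)} {x : Fin (n + 1) → k}
    (hx : x ∈ Vt k n (Equiv.swap a b)) :
    ∃ v : Fin (n + 1) → k, v a ≠ v b ∧ (∃ c : k, c • v = x) ∧
      ∀ c : k, c • v ∈ Vt k n (Equiv.swap a b) := by
  obtain ⟨L, hL, hxL⟩ := Set.mem_iUnion₂.1 hx
  have hLsub : L ⊆ Vt k n (Equiv.swap a b) := Set.subset_iUnion₂ (s := fun L _ => L) L hL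
  obtain ⟨⟨⟨v, -, rfl⟩, T, -, hLT⟩, hLt⟩ := hL
  obtain ⟨_, ⟨c, rfl⟩, hcv⟩ := Set.not_subset.1 hLt
  refine ⟨v, fun hab => hcv ⟨?_, fun j => ?_⟩, hxL, fun c => hLsub ⟨c, rfl⟩⟩
  · exact (hLT.subset ⟨c, rfl⟩).1
  · rw [Equiv.swap_apply_def]
    split_ifs <;> simp_all

end WeylLines

theorem eval_smul_eq_zero_of_forall_ne_zero {K ι : Type*} [Field K] [Infinite K]
    {g : MvPolynomial ι K} {v : ι → K} (h : ∀ c : K, c ≠ 0 → eval (c • v) g = 0) (c : K) :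
    eval (c • v) g = 0 := by
  set q : Polynomial K := aeval (fun j => Polynomial.C (v j) * Polynomial.X) g
  have hq : ∀ t, q.eval t = eval (t • v) g := fun t => by
    have hv : (fun j => Polynomial.aeval t (Polynomial.C (v j) * Polynomial.X)) = t • v := by
      ext j
      simp only [map_mul, Polynomial.aeval_C, Polynomial.aeval_X, Pi.smul_apply, smul_eq_mul]
      exact mul_comm _ _
    rw [← Polynomial.coe_aeval_eq_eval, comp_aeval_apply, hv]
    rfl
  have hq0 : q = 0 := q.eq_zero_of_infinite_isRoot <|
    (Set.finite_singleton 0).infinite_compl.mono fun t ht => by simpa [hq] using h t ht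
  rw [← hq, hq0, Polynomial.eval_zero]

theorem X_sub_X_dvd_sub_rename_swap {R ι : Type*} [CommRing R] [DecidableEq ι] (a b : ι)
    (p : MvPolynomial ι R) : X a - X b ∣ p - rename (Equiv.swap a b) p := by
  rw [← Ideal.mem_span_singleton, ← Ideal.Quotient.eq]
  set mk := Ideal.Quotient.mkₐ R (Ideal.span {(X a - X b : MvPolynomial ι R)})
  have hab : mk (X a) = mk (X b) := by
    simp only [mk, Ideal.Quotient.mkₐ_eq_mk, Ideal.Quotient.eq]
    exact Ideal.mem_span_singleton_self _
  have hrename : mk.comp (rename (Equiv.swap a b)) = mk := by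
    refine algHom_ext fun j => ?_
    rw [AlgHom.comp_apply, rename_X, Equiv.swap_apply_def]
    split_ifs <;> simp_all
  exact (AlgHom.congr_fun hrename p).symm

section CoordinateRing

omit [CharZero k]
variable {k n}

noncomputable def mkO (X : Set (Fin (n + 1) → k)) : MvPolynomial (Fin (n + 1)) k →+* O k n X :=
  Ideal.Quotient.mk _

theorem mkO_surjective (X : Set (Fin (n + 1) → k)) : Function.Surjective (mkO X) :=
  Ideal.Quotient.mk_surjective

theorem mkO_eq_zero_iff {X : Set (Fin (n + 1) → k)} {p : MvPolynomial (Fin (n + 1)) k} :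
    mkO X p = 0 ↔ p ∈ vanishingIdeal k X :=
  Ideal.Quotient.eq_zero_iff_mem

theorem isUnit_two_O [CharZero k] (X : Set (Fin (n + 1) → k)) : IsUnit (2 : O k n X) := by
  have h := (IsUnit.mk0 (2 : k) two_ne_zero).map ((mkO X).comp C)
  rwa [map_ofNat] at h

theorem permO_mkO {σ : Equiv.Perm (Fin (n + 1))} {X : Set (Fin (n + 1) → k)}
    (hX : ∀ x ∈ X, x ∘ σ ∈ X) (p : MvPolynomial (Fin (n + 1)) k) :
    permO k n σ X (mkO X p) = mkO X (rename σ p) := by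
  rw [permO]
  exact congrArg (fun f : O k n X →+* O k n X => f (mkO X p)) (dif_pos hX)

variable {a b : Fin (n + 1)}

local notation "Vab" => Vt k n (Equiv.swap a b)

theorem permO_swap_mkO (p : MvPolynomial (Fin (n + 1)) k) :
    permO k n (Equiv.swap a b) Vab (mkO Vab p) = mkO Vab (rename (Equiv.swap a b) p) :=
  permO_mkO (fun _ => comp_self_mem_Vt) p

theorem permO_swap_permO_swap (x : O k n Vab) :
    permO k n (Equiv.swap a b) Vab (permO k n (Equiv.swap a b) Vab x) = x := by
  obtain ⟨p, rfl⟩ := mkO_surjective _ x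
  rw [permO_swap_mkO, permO_swap_mkO, rename_rename, ← Equiv.Perm.coe_mul, Equiv.swap_mul_self,
    Equiv.Perm.coe_one, rename_id, AlgHom.id_apply]

theorem permO_swap_mkO_X_sub_X :
    permO k n (Equiv.swap a b) Vab (mkO Vab (X a - X b)) = -mkO Vab (X a - X b) := by
  simp [permO_swap_mkO]

theorem mkO_X_sub_X_dvd_sub_permO_swap (x : O k n Vab) :
    mkO Vab (X a - X b) ∣ x - permO k n (Equiv.swap a b) Vab x := by
  obtain ⟨p, rfl⟩ := mkO_surjective _ x
  rw [permO_swap_mkO, ← map_sub]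
  exact map_dvd _ (X_sub_X_dvd_sub_rename_swap a b p)

theorem isLeftRegular_mkO_X_sub_X [Infinite k] : IsLeftRegular (mkO Vab (X a - X b)) := by
  refine isLeftRegular_iff_right_eq_zero_of_mul.2 fun y hy => ?_
  obtain ⟨g, rfl⟩ := mkO_surjective _ y
  rw [← map_mul, mkO_eq_zero_iff, mem_vanishingIdeal_iff] at hy
  refine mkO_eq_zero_iff.2 (mem_vanishingIdeal_iff.2 fun x hx => ?_)
  obtain ⟨v, hv, ⟨c, rfl⟩, hline⟩ := exists_line_of_mem_Vt_swap hx
  refine eval_smul_eq_zero_of_forall_ne_zero (fun t ht => ?_) c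
  have hyt := hy _ (hline t)
  simp only [map_mul, map_sub, aeval_X, Pi.smul_apply, smul_eq_mul, ← mul_sub] at hyt
  exact (mul_eq_zero.1 hyt).resolve_left (mul_ne_zero ht (sub_ne_zero.2 hv))

end CoordinateRing

theorem existsUnique_add_mul_of_involutive {S : Type*} [CommRing S] {σ : S →+* S}
    (hσ : ∀ x, σ (σ x) = x) (h2 : IsUnit (2 : S)) {F : S} (hF : IsLeftRegular F)
    (hσF : σ F = -F) (hdvd : ∀ x, F ∣ x - σ x) (x : S) :
    ∃! c : RingHom.eqLocus σ (RingHom.id S) × RingHom.eqLocus σ (RingHom.id S),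
      x = c.1 + c.2 * F := by
  obtain ⟨half, hhalf⟩ := h2.exists_right_inv
  have hσhalf : σ half = half := h2.mul_left_cancel <| by
    rw [hhalf, ← map_ofNat σ 2, ← map_mul, hhalf, map_one]
  obtain ⟨h, hh⟩ := hdvd x
  have hσh : σ h = h := hF <| by
    have hσhh := congrArg σ hh
    rw [map_sub, map_mul, hσ, hσF] at hσhh
    linear_combination hσhh + hh
  refine ⟨(⟨half * (x + σ x), ?_⟩, ⟨half * h, ?_⟩), ?_, ?_⟩
  · simp [hσhalf, hσ, add_comm]
  · simp [hσhalf, hσh]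
  · linear_combination half * hh - x * hhalf
  · rintro ⟨⟨c₁, hc₁ : σ c₁ = c₁⟩, ⟨c₂, hc₂ : σ c₂ = c₂⟩⟩ (hc : x = c₁ + c₂ * F)
    have hσx : σ x = c₁ - c₂ * F := by simp [hc, hc₁, hc₂, hσF, sub_eq_add_neg]
    refine Prod.ext (Subtype.ext ?_) (Subtype.ext (hF ?_))
    · linear_combination (-half) * (hc + hσx) - c₁ * hhalf
    · linear_combination (-F * c₂) * hhalf + half * hh - half * hc + half * hσx

noncomputable def basisOfExistsUniqueAddMul {S : Type} [CommRing S] {R : Subring S} {F : S}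
    (H : ∀ x : S, ∃! c : R × R, x = c.1 + c.2 * F) : Module.Basis (Fin 2) R S :=
  .mk (v := ![1, F])
    (LinearIndependent.pair_iff.2 fun s t hst => by
      have hzero := (H 0).unique (y₁ := (s, t)) (y₂ := 0)
        (by simpa [Subring.smul_def, eq_comm] using hst) (by simp)
      simpa [Prod.ext_iff] using hzero)
    (fun x _ => by
      obtain ⟨c, hc, -⟩ := H x
      rw [Matrix.range_cons_cons_empty, Submodule.mem_span_pair]
      exact ⟨c.1, c.2, by simp [Subring.smul_def, hc]⟩)

theorem freeRankVia_algebraMap {R S : Type} [CommRing R] [CommRing S] [Algebra R S] {m : ℕ}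
    (b : Module.Basis (Fin m) R S) : FreeRankVia (algebraMap R S) m := by
  refine ⟨b, fun x => ⟨b.repr x, ?_, fun c hc => ?_⟩⟩
  · simpa only [Algebra.smul_def] using (b.sum_repr x).symm
  · simpa only [hc, Algebra.smul_def] using (b.repr_sum_self c).symm

theorem FreeRankVia.comp_ringEquiv {R S T : Type} [CommRing R] [CommRing S] [CommRing T]
    {f : R →+* S} {m : ℕ} (hf : FreeRankVia f m) (e : S ≃+* T) :
    FreeRankVia ((e : S →+* T).comp f) m := by
  obtain ⟨b, hb⟩ := hf
  refine ⟨fun j => e (b j), fun x => ?_⟩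
  obtain ⟨c, hc, huniq⟩ := hb (e.symm x)
  refine ⟨c, ?_, fun d hd => huniq d ?_⟩
  · simpa [← map_mul, ← map_sum] using congrArg e hc
  · simpa [← map_mul, ← map_sum] using congrArg e.symm hd

theorem freeRankVia_includeLeftRingHom {R S : Type} [CommRing R] [CommRing S] [Algebra R S]
    {m : ℕ} (b : Module.Basis (Fin m) R S) :
    FreeRankVia (Algebra.TensorProduct.includeLeftRingHom : S →+* S ⊗[R] S) m :=
  freeRankVia_algebraMap (Algebra.TensorProduct.basis S b)

theorem freeRankVia_includeRight {R S : Type} [CommRing R] [CommRing S] [Algebra R S]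
    {m : ℕ} (b : Module.Basis (Fin m) R S) :
    FreeRankVia (Algebra.TensorProduct.includeRight.toRingHom : S →+* S ⊗[R] S) m := by
  convert (freeRankVia_includeLeftRingHom b).comp_ringEquiv
    (Algebra.TensorProduct.comm R S S).toRingEquiv
  ext a
  simp

theorem Bi_free_rank_two (i : ℕ) :
    (∀ x : O k n (Vi k n i), ∃! c : (fixedO k n i) × (fixedO k n i),
        x = ↑c.1 + ↑c.2 * fbar k n (Vi k n i) i) ∧
    FreeRankVia (Algebra.TensorProduct.includeLeftRingHom :
        O k n (Vi k n i) →+* (O k n (Vi k n i) ⊗[fixedO k n i] O k n (Vi k n i))) 2 ∧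
    FreeRankVia (Algebra.TensorProduct.includeRight.toRingHom :
        O k n (Vi k n i) →+* (O k n (Vi k n i) ⊗[fixedO k n i] O k n (Vi k n i))) 2 := by
  have : Infinite k := CharZero.infinite k
  have hbasis : ∀ x : O k n (Vi k n i), ∃! c : (fixedO k n i) × (fixedO k n i),
      x = ↑c.1 + ↑c.2 * fbar k n (Vi k n i) i :=
    existsUnique_add_mul_of_involutive permO_swap_permO_swap (isUnit_two_O _)
      isLeftRegular_mkO_X_sub_X permO_swap_mkO_X_sub_X mkO_X_sub_X_dvd_sub_permO_swap
  exact ⟨hbasis, freeRankVia_includeLeftRingHom (basisOfExistsUniqueAddMul hbasis),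
    freeRankVia_includeRight (basisOfExistsUniqueAddMul hbasis)⟩

end TLpaper
end
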